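/- arXiv:1307.7079 — 2 statements merged into one kernel-verified Lean document; each statement's English description precedes it below -/
import Mathlib

section
/- Let $a \in (-1,1)$, $n \ge 1$, $P^a_y(x) = C y^{1-a}(|x|^2+y^2)^{-(n+1-a)/2}$, and let $\varphi \in C_0^\infty(\mathbb{R}^{n+1})$ be even in $y$ and supported in the unit ball. Define $\Psi^i(x) = 2\int_0^\infty\int_{\mathbb{R}^n} \frac{\partial\varphi}{\partial z_i}(z,y)\, P^a_y(x-z)\, y^a\, dz\, dy$. Then there is a constant $C' > 0$ such that $|\Psi^i(x)| \le C' |x|^{-(n+2-a)}$ for all $|x| > 2$. -/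
open MeasureTheory Set

lemma integral_fderiv_apply_eq_zero' {E : Type*} [NormedAddCommGroup E] [NormedSpace ℝ E]
    [MeasurableSpace E] [BorelSpace E] [FiniteDimensional ℝ E] {μ : Measure E}
    [μ.IsAddHaarMeasure] {g : E → ℝ} (hg : ContDiff ℝ (⊤ : ℕ∞) g) (hgc : HasCompactSupport g)
    (v : E) : ∫ z, fderiv ℝ g z v ∂μ = 0 := by
  obtain ⟨D, hD⟩ := ContDiff.lipschitzWith_of_hasCompactSupport hgc hg (by simp)
  have h := LipschitzWith.integral_lineDeriv_mul_eq (μ := μ)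
    (LipschitzWith.const (1 : ℝ)) hD hgc v
  simp only [(differentiableAt_const (1:ℝ)).lineDeriv_eq_fderiv, fderiv_fun_const,
    Pi.zero_apply, ContinuousLinearMap.zero_apply, zero_mul, integral_zero] at h
  have h2 : ∀ z, lineDeriv ℝ g z (-v) = -(fderiv ℝ g z v) := by
    intro z
    rw [((hg.differentiable (by simp)) z).lineDeriv_eq_fderiv, map_neg]
  simp only [h2, mul_one, integral_neg] at h
  linarith [h.symm]

lemma pm_hasFDerivAt {E : Type*} [NormedAddCommGroup E] [InnerProductSpace ℝ E]
    (c y e : ℝ) (hy : 0 < y) (w : E) :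
    HasFDerivAt (fun w : E => c * (‖w‖ ^ 2 + y ^ 2) ^ e)
      (c • (e * (‖w‖ ^ 2 + y ^ 2) ^ (e - 1)) • (2 • (innerSL ℝ w))) w := by
  have h1 : HasFDerivAt (fun w : E => ‖w‖ ^ 2 + y ^ 2) (2 • (innerSL ℝ w)) w := by
    have := (hasFDerivAt_id w).norm_sq.add_const (y ^ 2)
    simpa using this
  have hq : (0:ℝ) < ‖w‖ ^ 2 + y ^ 2 := by positivity
  have h2 := Real.hasDerivAt_rpow_const (x := ‖w‖ ^ 2 + y ^ 2) (p := e) (Or.inl (ne_of_gt hq))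
  exact (h2.comp_hasFDerivAt w h1).const_mul c

set_option maxHeartbeats 1000000 in
set_option synthInstance.maxHeartbeats 1000000 in
lemma pm_deriv_norm_le {E : Type*} [NormedAddCommGroup E] [InnerProductSpace ℝ E]
    {c y e r : ℝ} (hc : 0 ≤ c) (he : e < 0) (hr : 0 < r) {w : E} (hw : r ≤ ‖w‖) (hy : 0 < y) :
    ‖c • (e * (‖w‖ ^ 2 + y ^ 2) ^ (e - 1)) • (2 • (innerSL ℝ w))‖
      ≤ c * (2 * |e|) * r ^ (2 * e - 1) := by
  have hw0 : (0:ℝ) < ‖w‖ := lt_of_lt_of_le hr hw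
  have hq : (0:ℝ) < ‖w‖ ^ 2 + y ^ 2 := by positivity
  have hnorm : ‖(2:ℕ) • (innerSL ℝ w)‖ ≤ 2 * ‖w‖ := by
    rw [two_smul]
    refine (norm_add_le _ _).trans ?_
    rw [innerSL_apply_norm]
    linarith
  calc ‖c • (e * (‖w‖ ^ 2 + y ^ 2) ^ (e - 1)) • (2 • (innerSL ℝ w))‖
      = c * (|e| * (‖w‖ ^ 2 + y ^ 2) ^ (e - 1)) * ‖(2:ℕ) • (innerSL ℝ w)‖ := by
        rw [norm_smul c ((e * (‖w‖ ^ 2 + y ^ 2) ^ (e - 1)) • (2 • (innerSL ℝ w))),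
          norm_smul (e * (‖w‖ ^ 2 + y ^ 2) ^ (e - 1)) (2 • (innerSL ℝ w)), norm_mul]
        rw [Real.norm_eq_abs, Real.norm_eq_abs, Real.norm_eq_abs, abs_of_nonneg hc,
          abs_of_nonneg (Real.rpow_nonneg hq.le _)]
        ring
    _ ≤ c * (|e| * (‖w‖ ^ 2 + y ^ 2) ^ (e - 1)) * (2 * ‖w‖) := by
        apply mul_le_mul_of_nonneg_left hnorm
        positivity
    _ ≤ c * (|e| * (‖w‖ ^ 2) ^ (e - 1)) * (2 * ‖w‖) := by
        have h1 : ((‖w‖ ^ 2 + y ^ 2):ℝ) ^ (e - 1) ≤ (‖w‖ ^ 2) ^ (e - 1) :=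
          Real.rpow_le_rpow_of_nonpos (by positivity) (by nlinarith) (by linarith)
        have h2 : (0:ℝ) ≤ 2 * ‖w‖ := by positivity
        apply mul_le_mul_of_nonneg_right _ h2
        apply mul_le_mul_of_nonneg_left _ hc
        exact mul_le_mul_of_nonneg_left h1 (abs_nonneg e)
    _ = c * (2 * |e|) * ‖w‖ ^ (2 * e - 1) := by
        rw [← Real.rpow_natCast ‖w‖ 2, ← Real.rpow_mul hw0.le]
        rw [show ((2:ℕ):ℝ) * (e - 1) = (2*e-1) + (-1) by push_cast; ring,
          Real.rpow_add hw0, Real.rpow_neg_one]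
        field_simp
    _ ≤ c * (2 * |e|) * r ^ (2 * e - 1) := by
        apply mul_le_mul_of_nonneg_left _ (by positivity)
        exact Real.rpow_le_rpow_of_nonpos hr hw (by linarith)

set_option maxHeartbeats 2000000 in
/-- for `φ ∈ C₀^∞(ℝ^{n+1})` even in `y` and supported in the unit ball,
the kernel `Ψⁱ(x) = 2∫_0^∞ ∫_{ℝⁿ} ∂φ/∂zᵢ(z,y) P^a_y(x-z) y^a dz dy` satisfies the
decay estimate `|Ψⁱ(x)| ≤ C' |x|^{-(n+2-a)}` for `|x| > 2`. -/
theorem psi_decay_estimate (n : ℕ) (hn : 1 ≤ n) (a C : ℝ)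
    (ha : a ∈ Set.Ioo (-1 : ℝ) 1) (hC : 0 < C)
    (P : ℝ → EuclideanSpace ℝ (Fin n) → ℝ)
    (hP : ∀ y : ℝ, 0 < y → ∀ x,
      P y x = C * y ^ (1 - a) * (‖x‖ ^ 2 + y ^ 2) ^ (-((n : ℝ) + 1 - a) / 2))
    (φ : EuclideanSpace ℝ (Fin n) × ℝ → ℝ) (hφ : ContDiff ℝ (⊤ : ℕ∞) φ)
    (hφcs : HasCompactSupport φ)
    (hφeven : ∀ (z : EuclideanSpace ℝ (Fin n)) (y : ℝ), φ (z, -y) = φ (z, y))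
    (hφsupp : Function.support φ ⊆ {p : EuclideanSpace ℝ (Fin n) × ℝ |
      ‖p.1‖ ^ 2 + p.2 ^ 2 ≤ 1})
    (i : Fin n) (Ψ : EuclideanSpace ℝ (Fin n) → ℝ)
    (hΨ : ∀ x, Ψ x = 2 * ∫ y in Set.Ioi (0 : ℝ), ∫ z : EuclideanSpace ℝ (Fin n),
      fderiv ℝ φ (z, y) (EuclideanSpace.single i (1 : ℝ), 0) * P y (x - z) * y ^ a) :
    ∃ C' : ℝ, 0 < C' ∧ ∀ x : EuclideanSpace ℝ (Fin n), 2 < ‖x‖ →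
      |Ψ x| ≤ C' * ‖x‖ ^ (-((n : ℝ) + 2 - a)) := by
  obtain ⟨ha1, ha2⟩ := ha
  have hn1 : (1:ℝ) ≤ (n:ℝ) := by exact_mod_cast hn
  set e : ℝ := -((n : ℝ) + 1 - a) / 2 with he_def
  have hne : (0:ℝ) < (n:ℝ) + 1 - a := by linarith
  have he_neg : e < 0 := by
    rw [he_def]
    exact div_neg_of_neg_of_pos (by linarith) (by norm_num)
  have h2e : 2 * e - 1 = -((n:ℝ) + 2 - a) := by rw [he_def]; ring
  obtain ⟨M, hM⟩ := (hφcs.fderiv ℝ).exists_bound_of_continuous (hφ.continuous_fderiv (by simp))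
  have hM0 : 0 ≤ M := le_trans (norm_nonneg _) (hM 0)
  set v : (EuclideanSpace ℝ (Fin n)) × ℝ := (EuclideanSpace.single i (1 : ℝ), 0) with hv_def
  have hv : ‖v‖ ≤ 1 := by
    rw [hv_def, Prod.norm_def]
    simp [EuclideanSpace.norm_single]
  set Vol : ℝ := (volume (Metric.closedBall (0 : (EuclideanSpace ℝ (Fin n))) 1)).toReal with hVol_def
  have hVol0 : 0 ≤ Vol := ENNReal.toReal_nonneg
  set K0 : ℝ := M * (C * (2 * |e|)) * Vol with hK0_def
  have hK00 : 0 ≤ K0 := by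
    apply mul_nonneg (mul_nonneg hM0 _) hVol0
    positivity
  have h2r : (0:ℝ) < 2 ^ ((n:ℝ) + 2 - a) := Real.rpow_pos_of_pos two_pos _
  refine ⟨2 * K0 * 2 ^ ((n:ℝ) + 2 - a) + 1, by nlinarith, fun x hx => ?_⟩
  have hx0 : (0:ℝ) < ‖x‖ := by linarith
  have hxhalf : (0:ℝ) < ‖x‖ / 2 := by linarith
  set S : Set ((EuclideanSpace ℝ (Fin n)) × ℝ) := {p | ‖p.1‖ ^ 2 + p.2 ^ 2 ≤ 1} with hS_def
  have hSclosed : IsClosed S := by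
    have : S = (fun p : (EuclideanSpace ℝ (Fin n)) × ℝ => ‖p.1‖ ^ 2 + p.2 ^ 2) ⁻¹' (Iic 1) := rfl
    rw [this]
    exact IsClosed.preimage (by fun_prop) isClosed_Iic
  have hts : tsupport φ ⊆ S := closure_minimal hφsupp hSclosed
  have hfd0 : ∀ p : (EuclideanSpace ℝ (Fin n)) × ℝ, p ∉ S → fderiv ℝ φ p = 0 := by
    intro p hp
    by_contra h
    exact hp (hts (support_fderiv_subset ℝ h))
  set I : ℝ → ℝ := fun y => ∫ z : (EuclideanSpace ℝ (Fin n)), fderiv ℝ φ (z, y) v * P y (x - z) * y ^ a with hI_def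
  set B : ℝ := K0 * (‖x‖ / 2) ^ (2 * e - 1) with hB_def
  have hB0 : 0 ≤ B := mul_nonneg hK00 (Real.rpow_nonneg hxhalf.le _)
  -- the key pointwise bound
  have key : ∀ y ∈ Ioi (0:ℝ), ‖I y‖ ≤ (Ioc (0:ℝ) 1).indicator (fun _ => B) y := by
    intro y hy
    have hy0 : (0:ℝ) < y := hy
    rcases le_or_gt y 1 with hy1 | hy1
    · rw [indicator_of_mem (show y ∈ Ioc (0:ℝ) 1 from ⟨hy0, hy1⟩)]
      set c : ℝ := C * y ^ (1 - a) with hc_def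
      have hc0 : 0 ≤ c := mul_nonneg hC.le (Real.rpow_nonneg hy0.le _)
      set q : (EuclideanSpace ℝ (Fin n)) → ℝ := fun w => c * (‖w‖ ^ 2 + y ^ 2) ^ e with hq_def
      have hPq : ∀ w, P y w = q w := fun w => hP y hy0 w
      set D : (EuclideanSpace ℝ (Fin n)) → ℝ := fun z => fderiv ℝ φ (z, y) v with hD_def
      have hDcont : Continuous D := by
        have h1 : Continuous fun z : (EuclideanSpace ℝ (Fin n)) => fderiv ℝ φ (z, y) :=
          (hφ.continuous_fderiv (by simp)).comp (continuous_id.prodMk continuous_const)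
        exact h1.clm_apply continuous_const
      have hDsupp : ∀ z : (EuclideanSpace ℝ (Fin n)), 1 < ‖z‖ → D z = 0 := by
        intro z hz
        have hns : (z, y) ∉ S := by
          simp only [hS_def, mem_setOf_eq, not_le]
          nlinarith
        simp [hD_def, hfd0 _ hns]
      have hDM : ∀ z : (EuclideanSpace ℝ (Fin n)), |D z| ≤ M := by
        intro z
        rw [hD_def]
        calc |fderiv ℝ φ (z, y) v| ≤ ‖fderiv ℝ φ (z, y)‖ * ‖v‖ :=
              (fderiv ℝ φ (z, y)).le_opNorm v
          _ ≤ M * 1 := mul_le_mul (hM _) hv (norm_nonneg _) hM0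
          _ = M := mul_one M
      have hqcont : Continuous q := by
        apply continuous_const.mul
        apply Continuous.rpow_const (by fun_prop)
        intro w
        left
        positivity
      -- gradient bound on segments
      have hgrad : ∀ z : (EuclideanSpace ℝ (Fin n)), ‖z‖ ≤ 1 → |q (x - z) - q x| ≤ c * (2 * |e|) * (‖x‖/2) ^ (2*e-1) := by
        intro z hz
        have hsub : segment ℝ (x - z) x ⊆ Metric.closedBall x ‖z‖ := by
          apply (convex_closedBall x ‖z‖).segment_subset
          · simp [Metric.mem_closedBall, dist_eq_norm]
          · exact Metric.mem_closedBall_self (norm_nonneg z)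
        have hwlow : ∀ w ∈ segment ℝ (x - z) x, ‖x‖ / 2 ≤ ‖w‖ := by
          intro w hw
          have h1 : ‖w - x‖ ≤ ‖z‖ := by
            simpa [Metric.mem_closedBall, dist_eq_norm] using hsub hw
          have h2 : ‖x‖ - ‖w‖ ≤ ‖w - x‖ := by
            rw [norm_sub_rev]
            exact norm_sub_norm_le x w
          linarith
        have hmv := Convex.norm_image_sub_le_of_norm_hasFDerivWithin_le
          (f := q) (f' := fun w => c • (e * (‖w‖ ^ 2 + y ^ 2) ^ (e - 1)) • (2 • (innerSL ℝ w)))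
          (fun w _ => (pm_hasFDerivAt c y e hy0 w).hasFDerivWithinAt)
          (fun w hw => pm_deriv_norm_le hc0 he_neg hxhalf (hwlow w hw) hy0)
          (convex_segment _ _) (left_mem_segment ℝ (x - z) x) (right_mem_segment ℝ (x - z) x)
        rw [Real.norm_eq_abs] at hmv
        have hxx : x - (x - z) = z := by abel
        rw [hxx] at hmv
        calc |q (x - z) - q x| = |q x - q (x - z)| := abs_sub_comm _ _
          _ ≤ c * (2 * |e|) * (‖x‖/2) ^ (2*e-1) * ‖z‖ := hmv
          _ ≤ c * (2 * |e|) * (‖x‖/2) ^ (2*e-1) * 1 := by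
              apply mul_le_mul_of_nonneg_left hz
              positivity
          _ = c * (2 * |e|) * (‖x‖/2) ^ (2*e-1) := mul_one _
      -- zero average of the derivative
      have hgsm : ContDiff ℝ (⊤ : ℕ∞) (fun z : (EuclideanSpace ℝ (Fin n)) => φ (z, y)) :=
        hφ.comp (contDiff_id.prodMk contDiff_const)
      have hφz : ∀ z : (EuclideanSpace ℝ (Fin n)), 1 < ‖z‖ → φ (z, y) = 0 := by
        intro z hz
        by_contra h
        have : (z, y) ∈ S := hφsupp h
        simp only [hS_def, mem_setOf_eq] at this
        nlinarith
      have hgcs : HasCompactSupport (fun z : (EuclideanSpace ℝ (Fin n)) => φ (z, y)) := by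
        apply HasCompactSupport.intro (isCompact_closedBall (0:(EuclideanSpace ℝ (Fin n))) 1)
        intro z hz
        simp only [Metric.mem_closedBall, dist_zero_right, not_le] at hz
        exact hφz z hz
      have hDfd : ∀ z : (EuclideanSpace ℝ (Fin n)), fderiv ℝ (fun z : (EuclideanSpace ℝ (Fin n)) => φ (z, y)) z (EuclideanSpace.single i 1) = D z := by
        intro z
        have h2 : HasFDerivAt (fun z : (EuclideanSpace ℝ (Fin n)) => (z, y)) ((ContinuousLinearMap.id ℝ (EuclideanSpace ℝ (Fin n))).prod 0) z :=
          (hasFDerivAt_id z).prodMk (hasFDerivAt_const y z)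
        have h1 : HasFDerivAt (fun z : (EuclideanSpace ℝ (Fin n)) => φ (z, y))
            ((fderiv ℝ φ (z, y)).comp ((ContinuousLinearMap.id ℝ (EuclideanSpace ℝ (Fin n))).prod 0)) z :=
          ((hφ.differentiable (by simp)) (z, y)).hasFDerivAt.comp z h2
        rw [h1.fderiv]
        simp [hD_def, hv_def]
      have hzero : ∫ z : (EuclideanSpace ℝ (Fin n)), D z = 0 := by
        have h0 := integral_fderiv_apply_eq_zero'
          (μ := (volume : Measure (EuclideanSpace ℝ (Fin n)))) hgsm hgcs
          (EuclideanSpace.single i (1:ℝ))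
        rw [← h0]
        exact integral_congr_ae (Filter.Eventually.of_forall fun z => (hDfd z).symm)
      -- integrability facts
      have hDcs : HasCompactSupport D := by
        apply HasCompactSupport.intro (isCompact_closedBall (0:(EuclideanSpace ℝ (Fin n))) 1)
        intro z hz
        simp only [Metric.mem_closedBall, dist_zero_right, not_le] at hz
        exact hDsupp z hz
      have hDint : Integrable D := hDcont.integrable_of_hasCompactSupport hDcs
      have hqdcont : Continuous fun z : (EuclideanSpace ℝ (Fin n)) => D z * (q (x - z) - q x) * y ^ a := by
        apply Continuous.mul _ continuous_const
        exact hDcont.mul ((hqcont.comp (continuous_const.sub continuous_id)).sub continuous_const)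
      have hint1 : Integrable (fun z : (EuclideanSpace ℝ (Fin n)) => D z * (q (x - z) - q x) * y ^ a) := by
        apply hqdcont.integrable_of_hasCompactSupport
        apply HasCompactSupport.intro (isCompact_closedBall (0:(EuclideanSpace ℝ (Fin n))) 1)
        intro z hz
        simp only [Metric.mem_closedBall, dist_zero_right, not_le] at hz
        simp [hDsupp z hz]
      -- rewrite I y
      have hIy : I y = ∫ z : (EuclideanSpace ℝ (Fin n)), D z * (q (x - z) - q x) * y ^ a := by
        have hrw : I y = ∫ z : (EuclideanSpace ℝ (Fin n)), D z * q (x - z) * y ^ a := by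
          simp only [hI_def]
          refine integral_congr_ae (Filter.Eventually.of_forall fun z => ?_)
          show (fderiv ℝ φ (z, y)) v * P y (x - z) * y ^ a = D z * q (x - z) * y ^ a
          rw [hPq (x - z)]
        rw [hrw]
        have hsplit : (fun z : (EuclideanSpace ℝ (Fin n)) => D z * q (x - z) * y ^ a)
            = fun z : (EuclideanSpace ℝ (Fin n)) => D z * (q (x - z) - q x) * y ^ a + (q x * y ^ a) * D z := by
          ext z; ring
        rw [hsplit, integral_add hint1 (hDint.const_mul _), integral_const_mul, hzero,
          mul_zero, add_zero]
      -- bound it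
      have hyy : y ^ (1 - a) * y ^ a = y := by
        rw [← Real.rpow_add hy0]
        norm_num
      set G : ℝ := M * (c * (2 * |e|) * (‖x‖/2) ^ (2*e-1)) * y ^ a with hG_def
      have hG0 : 0 ≤ G := by
        apply mul_nonneg (mul_nonneg hM0 _) (Real.rpow_nonneg hy0.le _)
        positivity
      have hptwise : ∀ z : (EuclideanSpace ℝ (Fin n)), ‖D z * (q (x - z) - q x) * y ^ a‖
          ≤ (Metric.closedBall (0:(EuclideanSpace ℝ (Fin n))) 1).indicator (fun _ => G) z := by
        intro z
        by_cases hz : ‖z‖ ≤ 1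
        · rw [indicator_of_mem (by simpa [Metric.mem_closedBall, dist_zero_right] using hz)]
          rw [Real.norm_eq_abs, abs_mul, abs_mul]
          rw [hG_def]
          have hya : |y ^ a| = y ^ a := abs_of_nonneg (Real.rpow_nonneg hy0.le _)
          rw [hya]
          apply mul_le_mul_of_nonneg_right _ (Real.rpow_nonneg hy0.le _)
          apply mul_le_mul (hDM z) (hgrad z hz) (abs_nonneg _) hM0
        · rw [indicator_of_notMem (by simpa [Metric.mem_closedBall, dist_zero_right] using hz)]
          rw [hDsupp z (not_le.1 hz)]
          simp
      calc ‖I y‖ = ‖∫ z : (EuclideanSpace ℝ (Fin n)), D z * (q (x - z) - q x) * y ^ a‖ := by rw [hIy]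
        _ ≤ ∫ z : (EuclideanSpace ℝ (Fin n)), ‖D z * (q (x - z) - q x) * y ^ a‖ := norm_integral_le_integral_norm _
        _ ≤ ∫ z : (EuclideanSpace ℝ (Fin n)), (Metric.closedBall (0:(EuclideanSpace ℝ (Fin n))) 1).indicator (fun _ => G) z := by
            apply integral_mono_of_nonneg (Filter.Eventually.of_forall fun z => norm_nonneg _)
              _ (Filter.Eventually.of_forall hptwise)
            rw [integrable_indicator_iff measurableSet_closedBall]
            exact integrableOn_const measure_closedBall_lt_top.ne
        _ = G * Vol := by
            rw [integral_indicator_const _ measurableSet_closedBall, hVol_def]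
            rw [smul_eq_mul, mul_comm]; rfl
        _ = B * (y ^ (1 - a) * y ^ a) := by
            rw [hG_def, hB_def, hK0_def, hc_def]
            ring
        _ = B * y := by rw [hyy]
        _ ≤ B := by nlinarith
    · rw [indicator_of_notMem (by simp only [mem_Ioc, not_and, not_le]; intro; exact hy1)]
      have hzero : I y = 0 := by
        rw [hI_def]
        have : ∀ z : (EuclideanSpace ℝ (Fin n)), fderiv ℝ φ (z, y) v * P y (x - z) * y ^ a = 0 := by
          intro z
          have hns : (z, y) ∉ S := by
            simp only [hS_def, mem_setOf_eq, not_le]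
            nlinarith [sq_nonneg ‖z‖, norm_nonneg z]
          rw [hfd0 _ hns]
          simp
        simp only [this, integral_zero]
      simp [hzero]
  -- integrability of the dominating function
  have hGint : Integrable ((Ioc (0:ℝ) 1).indicator fun _ => B) (volume.restrict (Ioi 0)) := by
    apply Integrable.restrict
    rw [integrable_indicator_iff measurableSet_Ioc]
    exact integrableOn_const measure_Ioc_lt_top.ne
  -- conclusion
  have hiic : Ioc (0:ℝ) 1 ∩ Ioi 0 = Ioc 0 1 := by
    apply inter_eq_left.2
    exact Ioc_subset_Ioi_self
  have hIint : ∫ y in Ioi (0:ℝ), (Ioc (0:ℝ) 1).indicator (fun _ => B) y = B := by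
    rw [integral_indicator measurableSet_Ioc, Measure.restrict_restrict measurableSet_Ioc,
      hiic, setIntegral_const]
    simp [Real.volume_Ioc]
  have hfinal : |Ψ x| ≤ 2 * B := by
    rw [hΨ x, abs_mul, abs_two]
    calc 2 * |∫ y in Ioi (0:ℝ), I y| ≤ 2 * ∫ y in Ioi (0:ℝ), ‖I y‖ := by
          apply mul_le_mul_of_nonneg_left _ two_pos.le
          rw [← Real.norm_eq_abs]
          exact norm_integral_le_integral_norm _
      _ ≤ 2 * ∫ y in Ioi (0:ℝ), (Ioc (0:ℝ) 1).indicator (fun _ => B) y := by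
          apply mul_le_mul_of_nonneg_left _ two_pos.le
          apply integral_mono_of_nonneg (Filter.Eventually.of_forall fun y => norm_nonneg _) hGint
          exact (ae_restrict_iff' measurableSet_Ioi).2 (Filter.Eventually.of_forall key)
      _ = 2 * B := by rw [hIint]
  -- convert (‖x‖/2) power into ‖x‖ power
  have hpow : (‖x‖ / 2) ^ (2 * e - 1) = 2 ^ ((n:ℝ) + 2 - a) * ‖x‖ ^ (-((n:ℝ) + 2 - a)) := by
    rw [h2e, Real.div_rpow hx0.le two_pos.le,
      Real.rpow_neg (le_of_lt (two_pos : (0:ℝ) < 2)) (((n:ℝ) + 2 - a)),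
      div_eq_mul_inv, inv_inv, mul_comm]
  have hxp : (0:ℝ) ≤ ‖x‖ ^ (-((n:ℝ) + 2 - a)) := Real.rpow_nonneg hx0.le _
  calc |Ψ x| ≤ 2 * B := hfinal
    _ = 2 * K0 * 2 ^ ((n:ℝ) + 2 - a) * ‖x‖ ^ (-((n:ℝ) + 2 - a)) := by
        rw [hB_def, hpow]; ring
    _ ≤ (2 * K0 * 2 ^ ((n:ℝ) + 2 - a) + 1) * ‖x‖ ^ (-((n:ℝ) + 2 - a)) := by
        apply mul_le_mul_of_nonneg_right _ hxp
        linarith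
end

section
/- Let $0 < \lambda < 1$, $C_0, C_1 > 0$, and let $\Psi: \mathbb{R}^n \to \mathbb{R}$ satisfy $|\Psi_r(z)| \le \frac{C_0}{r^{n+1}}|z|$ for all $z$ (where $\Psi_r(z) = r^{-n}\Psi(z/r)$) and $|\Psi(z)| \le C_1 |z|^{-(n+2-a)}$ for $|z| > 2$, with $a < 1$. Suppose $f$ is locally integrable on $\mathbb{R}^n$ and $\int_{\mathbb{R}^n}\Psi_r(x-z)\,dz = 0$. Then there is a constant $C$, independent of $f$, $x$, and $r$, such that $\frac{1}{r}\left|\int_{\mathbb{R}^n}(f(z)-f(x))\,\Psi_r(x-z)\,dz\right| \le C\, r^{\lambda - 1}\, M^{\sharp,\lambda}f(x)$, where $M^{\sharp,\lambda}f(x) = \sup_{B \ni x} |B|^{-1-\lambda/n}\int_B |f(y)-f(x)|\,dy$ (supremum over all balls of $\mathbb{R}^n$ containing $x$), whenever the left side is finite. -/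
/-!
Split the integral at `|x - z| = 2r`. On the ball, the linear bound gives
`|Ψ_r(x - z)| ≤ 2 C₀ r^{-n}`; on the dyadic annulus `2^j · 2r < |x - z| ≤ 2^{j+1} · 2r` the decay
bound gives `|Ψ_r(x - z)| ≤ C₁ r^{-n} 2^{-(j+1)(n+2-a)}`. Each piece is then controlled by
`∫_B |f - f(x)|` over a ball `B ∋ x` of radius `ρ`, which is at most
`|B|^{1+λ/n} M^{♯,λ}f(x) = c_n ρ^{n+λ} M^{♯,λ}f(x)`. The annuli contribute a geometric series
of ratio `2^{λ-2+a} < 1`, so the whole integral is `O(r^λ M^{♯,λ}f(x))`.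
-/

open MeasureTheory Set ENNReal

/-- The sharp Calderón maximal operator
`M^{♯,λ}f(x) = sup_{B ∋ x} |B|^{-1-λ/n} ∫_B |f(y) - f(x)| dy`, supremum over all
Euclidean balls of `ℝⁿ` containing `x`. -/
noncomputable def sharpCalderonMaximal (n : ℕ) (lam : ℝ)
    (f : EuclideanSpace ℝ (Fin n) → ℝ) (x : EuclideanSpace ℝ (Fin n)) : ℝ≥0∞ :=
  ⨆ (c : EuclideanSpace ℝ (Fin n)) (ρ : ℝ) (_ : 0 < ρ) (_ : x ∈ Metric.ball c ρ),
    (volume (Metric.ball c ρ)) ^ (-(1 + lam / n)) *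
      ∫⁻ w in Metric.ball c ρ, ENNReal.ofReal |f w - f x|

open Metric

lemma tsum_ofReal_mul_pow_succ {c q : ℝ} (hc : 0 ≤ c) (hq0 : 0 ≤ q) (hq1 : q < 1) :
    ∑' j : ℕ, ENNReal.ofReal (c * q ^ (j + 1)) = ENNReal.ofReal (c * q / (1 - q)) := by
  have hterm : (fun j : ℕ => c * q ^ (j + 1)) = fun j => c * q * q ^ j := by
    ext j; ring
  rw [← ENNReal.ofReal_tsum_of_nonneg (fun j => by positivity)
    (hterm ▸ (summable_geometric_of_lt_one hq0 hq1).mul_left (c * q)), hterm, tsum_mul_left,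
    tsum_geometric_of_lt_one hq0 hq1, div_eq_mul_inv]

section Dyadic

variable {X : Type*} [PseudoMetricSpace X]

/-- Open on the inside, so that the decay bound (stated for `2 < ‖z‖`) applies on the first
annulus. -/
def dyadicAnnulus (x : X) (R : ℝ) (j : ℕ) : Set X :=
  closedBall x (2 ^ (j + 1) * R) \ closedBall x (2 ^ j * R)

lemma exists_two_pow_lt_le {u : ℝ} (hu : 1 < u) : ∃ j : ℕ, 2 ^ j < u ∧ u ≤ 2 ^ (j + 1) := by
  obtain ⟨j, hj_lt, hj_le⟩ := exists_mem_Ioc_zpow (zero_lt_one.trans hu) one_lt_two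
  lift j to ℕ using by
    by_contra! hj
    linarith [zpow_le_one_of_nonpos₀ (one_le_two : (1 : ℝ) ≤ 2) (by omega : j + 1 ≤ 0)]
  exact ⟨j, by exact_mod_cast hj_lt, by exact_mod_cast hj_le⟩

lemma compl_closedBall_subset_iUnion_dyadicAnnulus (x : X) {R : ℝ} (hR : 0 < R) :
    (closedBall x R)ᶜ ⊆ ⋃ j, dyadicAnnulus x R j := by
  intro z hz
  rw [mem_compl_iff, mem_closedBall, not_le, ← one_lt_div hR] at hz
  obtain ⟨j, hj_lt, hj_le⟩ := exists_two_pow_lt_le hz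
  rw [lt_div_iff₀ hR] at hj_lt
  rw [div_le_iff₀ hR] at hj_le
  exact mem_iUnion.2 ⟨j, mem_closedBall.2 hj_le, fun h => (mem_closedBall.1 h).not_gt hj_lt⟩

lemma dyadicAnnulus_subset_closedBall (x : X) (R : ℝ) (j : ℕ) :
    dyadicAnnulus x R j ⊆ closedBall x (2 ^ (j + 1) * R) :=
  sdiff_subset

lemma measurableSet_dyadicAnnulus [MeasurableSpace X] [OpensMeasurableSpace X] (x : X) (R : ℝ)
    (j : ℕ) : MeasurableSet (dyadicAnnulus x R j) :=
  measurableSet_closedBall.diff measurableSet_closedBall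

end Dyadic

section Volume

variable {E : Type*} [NormedAddCommGroup E] [NormedSpace ℝ E] [MeasurableSpace E] [BorelSpace E]
  [FiniteDimensional ℝ E] (μ : Measure E) [μ.IsAddHaarMeasure]

lemma addHaar_ball_rpow (hE : Module.finrank ℝ E ≠ 0) (lam : ℝ) (c : E) {ρ : ℝ} (hρ : 0 < ρ) :
    μ (ball c ρ) ^ (1 + lam / Module.finrank ℝ E) =
      ENNReal.ofReal (ρ ^ (Module.finrank ℝ E + lam)) *
        μ (ball 0 1) ^ (1 + lam / Module.finrank ℝ E) := by
  rw [Measure.addHaar_ball_of_pos μ c hρ,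
    ENNReal.mul_rpow_of_ne_top ofReal_ne_top measure_ball_lt_top.ne,
    ENNReal.ofReal_rpow_of_pos (by positivity), ← Real.rpow_natCast, ← Real.rpow_mul hρ.le]
  congr 3
  field_simp

end Volume

section SharpMaximal

variable {n : ℕ} {lam : ℝ} {f : EuclideanSpace ℝ (Fin n) → ℝ} {x : EuclideanSpace ℝ (Fin n)}

lemma lintegral_ball_le_sharpCalderonMaximal (hn : n ≠ 0) {c : EuclideanSpace ℝ (Fin n)} {ρ : ℝ}
    (hρ : 0 < ρ) (hx : x ∈ ball c ρ) :
    ∫⁻ w in ball c ρ, ENNReal.ofReal |f w - f x| ≤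
      ENNReal.ofReal (ρ ^ ((n : ℝ) + lam)) *
        volume (ball (0 : EuclideanSpace ℝ (Fin n)) 1) ^ (1 + lam / n) *
          sharpCalderonMaximal n lam f x := by
  set B := volume (ball c ρ)
  have hB0 : B ≠ 0 := (measure_ball_pos volume c hρ).ne'
  have hBtop : B ≠ ⊤ := measure_ball_lt_top.ne
  have hmax : B ^ (-(1 + lam / n)) * ∫⁻ w in ball c ρ, ENNReal.ofReal |f w - f x| ≤
      sharpCalderonMaximal n lam f x :=
    le_iSup₂_of_le c ρ <| le_iSup₂_of_le hρ hx le_rfl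
  have hvol := addHaar_ball_rpow volume (by simpa using hn) lam c hρ
  rw [finrank_euclideanSpace_fin] at hvol
  calc ∫⁻ w in ball c ρ, ENNReal.ofReal |f w - f x|
      = B ^ (1 + lam / n) *
          (B ^ (-(1 + lam / n)) * ∫⁻ w in ball c ρ, ENNReal.ofReal |f w - f x|) := by
        rw [← mul_assoc, ← ENNReal.rpow_add _ _ hB0 hBtop, add_neg_cancel, ENNReal.rpow_zero,
          one_mul]
    _ ≤ _ := by rw [← hvol]; gcongr

lemma setLIntegral_le_sharpCalderonMaximal (hn : n ≠ 0) {g : EuclideanSpace ℝ (Fin n) → ℝ}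
    {s : Set (EuclideanSpace ℝ (Fin n))} (hs : MeasurableSet s) {R K : ℝ} (hR : 0 < R)
    (hsub : s ⊆ closedBall x R) (hg : ∀ z ∈ s, |g z| ≤ K * |f z - f x|) :
    ∫⁻ z in s, ENNReal.ofReal |g z| ≤
      ENNReal.ofReal (K * (2 * R) ^ ((n : ℝ) + lam)) *
        volume (ball (0 : EuclideanSpace ℝ (Fin n)) 1) ^ (1 + lam / n) *
          sharpCalderonMaximal n lam f x := by
  calc ∫⁻ z in s, ENNReal.ofReal |g z|
      ≤ ∫⁻ z in s, ENNReal.ofReal K * ENNReal.ofReal |f z - f x| :=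
        setLIntegral_mono' hs fun z hz =>
          (ENNReal.ofReal_le_ofReal (hg z hz)).trans_eq (ENNReal.ofReal_mul' (abs_nonneg _))
    _ = ENNReal.ofReal K * ∫⁻ z in s, ENNReal.ofReal |f z - f x| :=
        lintegral_const_mul' _ _ ENNReal.ofReal_ne_top
    _ ≤ ENNReal.ofReal K * ∫⁻ z in ball x (2 * R), ENNReal.ofReal |f z - f x| := by
        gcongr
        exact hsub.trans (closedBall_subset_ball (by linarith))
    _ ≤ ENNReal.ofReal K * (ENNReal.ofReal ((2 * R) ^ ((n : ℝ) + lam)) *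
          volume (ball (0 : EuclideanSpace ℝ (Fin n)) 1) ^ (1 + lam / n) *
            sharpCalderonMaximal n lam f x) := by
        gcongr
        exact lintegral_ball_le_sharpCalderonMaximal hn (by positivity)
          (mem_ball_self (by positivity))
    _ = _ := by rw [ENNReal.ofReal_mul' (by positivity)]; ring

end SharpMaximal

lemma abs_rpow_mul_apply_inv_smul_le {E : Type*} [NormedAddCommGroup E] [NormedSpace ℝ E]
    {Ψ : E → ℝ} {C1 e d r t : ℝ} (hC1 : 0 ≤ C1) (he : 0 ≤ e)
    (hΨ2 : ∀ w : E, 2 < ‖w‖ → |Ψ w| ≤ C1 * ‖w‖ ^ (-e)) (hr : 0 < r) (ht : 2 ≤ t) {w : E}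
    (hw : t * r < ‖w‖) :
    |r ^ (-d) * Ψ (r⁻¹ • w)| ≤ C1 * r ^ (-d) * t ^ (-e) := by
  have hnorm : ‖r⁻¹ • w‖ = ‖w‖ / r := by
    rw [norm_smul, Real.norm_eq_abs, abs_of_pos (inv_pos.2 hr), inv_mul_eq_div]
  have ht_lt : t < ‖r⁻¹ • w‖ := by rwa [hnorm, lt_div_iff₀ hr]
  calc |r ^ (-d) * Ψ (r⁻¹ • w)| = r ^ (-d) * |Ψ (r⁻¹ • w)| := by
        rw [abs_mul, abs_of_pos (by positivity)]
    _ ≤ r ^ (-d) * (C1 * ‖r⁻¹ • w‖ ^ (-e)) := by gcongr; exact hΨ2 _ (by linarith)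
    _ ≤ r ^ (-d) * (C1 * t ^ (-e)) := by
        have := Real.rpow_le_rpow_of_nonpos (by linarith) ht_lt.le (neg_nonpos.2 he)
        gcongr
    _ = C1 * r ^ (-d) * t ^ (-e) := by ring

section Kernel

variable {n : ℕ} {lam a C0 C1 r : ℝ} {Ψ : EuclideanSpace ℝ (Fin n) → ℝ}
  {f : EuclideanSpace ℝ (Fin n) → ℝ} {x : EuclideanSpace ℝ (Fin n)}

lemma setLIntegral_closedBall_kernel_le (hn : n ≠ 0) (hC0 : 0 ≤ C0) (hr : 0 < r)
    (hΨ1 : ∀ z : EuclideanSpace ℝ (Fin n),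
      |r ^ (-(n : ℝ)) * Ψ (r⁻¹ • z)| ≤ C0 / r ^ ((n : ℝ) + 1) * ‖z‖) :
    ∫⁻ z in closedBall x (2 * r),
        ENNReal.ofReal |(f z - f x) * (r ^ (-(n : ℝ)) * Ψ (r⁻¹ • (x - z)))| ≤
      ENNReal.ofReal (2 * C0 * 4 ^ ((n : ℝ) + lam) * r ^ lam) *
        volume (ball (0 : EuclideanSpace ℝ (Fin n)) 1) ^ (1 + lam / n) *
          sharpCalderonMaximal n lam f x := by
  have hK : ∀ z ∈ closedBall x (2 * r),
      |(f z - f x) * (r ^ (-(n : ℝ)) * Ψ (r⁻¹ • (x - z)))| ≤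
        2 * C0 * r ^ (-(n : ℝ)) * |f z - f x| := by
    intro z hz
    have hxz : ‖x - z‖ ≤ 2 * r := by rw [← dist_eq_norm, dist_comm]; exact hz
    calc _ = |f z - f x| * |r ^ (-(n : ℝ)) * Ψ (r⁻¹ • (x - z))| := abs_mul _ _
      _ ≤ |f z - f x| * (C0 / r ^ ((n : ℝ) + 1) * (2 * r)) := by
          gcongr
          exact (hΨ1 _).trans (by gcongr)
      _ = _ := by
          rw [Real.rpow_neg hr.le, Real.rpow_add_one hr.ne']
          field_simp
  convert setLIntegral_le_sharpCalderonMaximal hn measurableSet_closedBall (by positivity)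
    subset_rfl hK using 3
  rw [show 2 * (2 * r) = 4 * r by ring, Real.mul_rpow (by norm_num) hr.le, Real.rpow_add hr,
    Real.rpow_neg hr.le]
  field_simp

lemma setLIntegral_dyadicAnnulus_kernel_le (hn : n ≠ 0) (hC1 : 0 ≤ C1) (ha : a ≤ n + 2) (hr : 0 < r)
    (hΨ2 : ∀ z : EuclideanSpace ℝ (Fin n), 2 < ‖z‖ →
      |Ψ z| ≤ C1 * ‖z‖ ^ (-((n : ℝ) + 2 - a))) (j : ℕ) :
    ∫⁻ z in dyadicAnnulus x (2 * r) j,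
        ENNReal.ofReal |(f z - f x) * (r ^ (-(n : ℝ)) * Ψ (r⁻¹ • (x - z)))| ≤
      ENNReal.ofReal (C1 * 4 ^ ((n : ℝ) + lam) * r ^ lam * (2 ^ (lam - 2 + a)) ^ (j + 1)) *
        volume (ball (0 : EuclideanSpace ℝ (Fin n)) 1) ^ (1 + lam / n) *
          sharpCalderonMaximal n lam f x := by
  set t : ℝ := 2 ^ (j + 1)
  have ht : 2 ≤ t := le_self_pow₀ one_le_two j.succ_ne_zero
  have hK : ∀ z ∈ dyadicAnnulus x (2 * r) j,
      |(f z - f x) * (r ^ (-(n : ℝ)) * Ψ (r⁻¹ • (x - z)))| ≤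
        C1 * r ^ (-(n : ℝ)) * t ^ (-((n : ℝ) + 2 - a)) * |f z - f x| := by
    rintro z ⟨-, hz⟩
    have hxz : t * r < ‖x - z‖ := by
      rw [← dist_eq_norm, dist_comm, show t * r = 2 ^ j * (2 * r) by simp only [t, pow_succ]; ring]
      exact not_le.1 (mt mem_closedBall.2 hz)
    rw [abs_mul, mul_comm]
    gcongr
    exact abs_rpow_mul_apply_inv_smul_le hC1 (by linarith) hΨ2 hr ht hxz
  convert setLIntegral_le_sharpCalderonMaximal hn (measurableSet_dyadicAnnulus x _ j)
    (by positivity) (dyadicAnnulus_subset_closedBall x _ j) hK using 3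
  have hq : ((2 : ℝ) ^ (lam - 2 + a)) ^ (j + 1) = t ^ (lam - 2 + a) := by
    rw [← Real.rpow_natCast, ← Real.rpow_mul zero_le_two, mul_comm, Real.rpow_mul zero_le_two,
      Real.rpow_natCast]
  have ht0 : 0 < t := by positivity
  rw [hq, show 2 * (t * (2 * r)) = 4 * t * r by ring, Real.mul_rpow (by positivity) hr.le,
    Real.mul_rpow (by norm_num) ht0.le]
  congr 1
  calc C1 * 4 ^ ((n : ℝ) + lam) * r ^ lam * t ^ (lam - 2 + a)
      = C1 * 4 ^ ((n : ℝ) + lam) * t ^ (-((n : ℝ) + 2 - a) + (n + lam)) *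
          r ^ (-(n : ℝ) + (n + lam)) := by ring_nf
    _ = _ := by rw [Real.rpow_add ht0, Real.rpow_add hr]; ring

lemma setLIntegral_compl_closedBall_kernel_le (hn : n ≠ 0) (hC1 : 0 ≤ C1) (ha : a ≤ n + 2)
    (hq : lam - 2 + a < 0) (hr : 0 < r)
    (hΨ2 : ∀ z : EuclideanSpace ℝ (Fin n), 2 < ‖z‖ →
      |Ψ z| ≤ C1 * ‖z‖ ^ (-((n : ℝ) + 2 - a))) :
    ∫⁻ z in (closedBall x (2 * r))ᶜ,
        ENNReal.ofReal |(f z - f x) * (r ^ (-(n : ℝ)) * Ψ (r⁻¹ • (x - z)))| ≤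
      ENNReal.ofReal (C1 * 4 ^ ((n : ℝ) + lam) * r ^ lam * 2 ^ (lam - 2 + a) /
          (1 - 2 ^ (lam - 2 + a))) *
        volume (ball (0 : EuclideanSpace ℝ (Fin n)) 1) ^ (1 + lam / n) *
          sharpCalderonMaximal n lam f x := by
  calc _ ≤ ∫⁻ z in ⋃ j, dyadicAnnulus x (2 * r) j,
          ENNReal.ofReal |(f z - f x) * (r ^ (-(n : ℝ)) * Ψ (r⁻¹ • (x - z)))| :=
        lintegral_mono_set (compl_closedBall_subset_iUnion_dyadicAnnulus x (by positivity))
    _ ≤ ∑' j, ∫⁻ z in dyadicAnnulus x (2 * r) j,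
          ENNReal.ofReal |(f z - f x) * (r ^ (-(n : ℝ)) * Ψ (r⁻¹ • (x - z)))| :=
        lintegral_iUnion_le _ _
    _ ≤ ∑' j, ENNReal.ofReal
          (C1 * 4 ^ ((n : ℝ) + lam) * r ^ lam * (2 ^ (lam - 2 + a)) ^ (j + 1)) *
            (volume (ball (0 : EuclideanSpace ℝ (Fin n)) 1) ^ (1 + lam / n) *
              sharpCalderonMaximal n lam f x) :=
        ENNReal.tsum_le_tsum fun j =>
          (setLIntegral_dyadicAnnulus_kernel_le hn hC1 ha hr hΨ2 j).trans_eq (mul_assoc _ _ _)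
    _ = _ := by
        rw [ENNReal.tsum_mul_right, tsum_ofReal_mul_pow_succ (by positivity) (by positivity)
          (Real.rpow_lt_one_of_one_lt_of_neg one_lt_two hq)]
        exact (mul_assoc _ _ _).symm

lemma lintegral_kernel_le (hn : n ≠ 0) (hC0 : 0 ≤ C0) (hC1 : 0 ≤ C1) (ha : a ≤ n + 2)
    (hq : lam - 2 + a < 0) (hr : 0 < r)
    (hΨ1 : ∀ z : EuclideanSpace ℝ (Fin n),
      |r ^ (-(n : ℝ)) * Ψ (r⁻¹ • z)| ≤ C0 / r ^ ((n : ℝ) + 1) * ‖z‖)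
    (hΨ2 : ∀ z : EuclideanSpace ℝ (Fin n), 2 < ‖z‖ →
      |Ψ z| ≤ C1 * ‖z‖ ^ (-((n : ℝ) + 2 - a))) :
    ∫⁻ z, ENNReal.ofReal |(f z - f x) * (r ^ (-(n : ℝ)) * Ψ (r⁻¹ • (x - z)))| ≤
      ENNReal.ofReal ((2 * C0 * 4 ^ ((n : ℝ) + lam) +
          C1 * 4 ^ ((n : ℝ) + lam) * 2 ^ (lam - 2 + a) / (1 - 2 ^ (lam - 2 + a))) * r ^ lam) *
        volume (ball (0 : EuclideanSpace ℝ (Fin n)) 1) ^ (1 + lam / n) *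
          sharpCalderonMaximal n lam f x := by
  have hq1 : (2 : ℝ) ^ (lam - 2 + a) < 1 := Real.rpow_lt_one_of_one_lt_of_neg one_lt_two hq
  rw [← lintegral_add_compl _ measurableSet_closedBall]
  refine (add_le_add (setLIntegral_closedBall_kernel_le (lam := lam) hn hC0 hr hΨ1)
    (setLIntegral_compl_closedBall_kernel_le hn hC1 ha hq hr hΨ2)).trans_eq ?_
  rw [← add_mul, ← add_mul, ← ENNReal.ofReal_add (by positivity)
    (div_nonneg (by positivity) (sub_nonneg.2 hq1.le))]
  congr 3
  ring

end Kernel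

lemma exists_lintegral_kernel_le {n : ℕ} (hn : n ≠ 0) {lam a C0 C1 : ℝ} (hC0 : 0 < C0)
    (hC1 : 0 ≤ C1) (ha : a ≤ n + 2) (hq : lam - 2 + a < 0) {Ψ : EuclideanSpace ℝ (Fin n) → ℝ}
    (hΨ1 : ∀ r : ℝ, 0 < r → ∀ z : EuclideanSpace ℝ (Fin n),
      |r ^ (-(n : ℝ)) * Ψ (r⁻¹ • z)| ≤ C0 / r ^ ((n : ℝ) + 1) * ‖z‖)
    (hΨ2 : ∀ z : EuclideanSpace ℝ (Fin n), 2 < ‖z‖ →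
      |Ψ z| ≤ C1 * ‖z‖ ^ (-((n : ℝ) + 2 - a))) :
    ∃ C : ℝ, 0 < C ∧ ∀ (f : EuclideanSpace ℝ (Fin n) → ℝ) (x : EuclideanSpace ℝ (Fin n)) {r : ℝ},
      0 < r → ∫⁻ z, ENNReal.ofReal |(f z - f x) * (r ^ (-(n : ℝ)) * Ψ (r⁻¹ • (x - z)))| ≤
        ENNReal.ofReal (C * r ^ lam) * sharpCalderonMaximal n lam f x := by
  have hq1 : (2 : ℝ) ^ (lam - 2 + a) < 1 := Real.rpow_lt_one_of_one_lt_of_neg one_lt_two hq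
  set W := volume (ball (0 : EuclideanSpace ℝ (Fin n)) 1) ^ (1 + lam / n)
  have hW : W ≠ ⊤ := ENNReal.rpow_ne_top_of_ne_zero (measure_ball_pos _ _ one_pos).ne'
    measure_ball_lt_top.ne
  have hW0 : 0 < W.toReal := ENNReal.toReal_pos
    (ENNReal.rpow_pos (measure_ball_pos _ _ one_pos) measure_ball_lt_top.ne).ne' hW
  set K := 2 * C0 * 4 ^ ((n : ℝ) + lam) +
    C1 * 4 ^ ((n : ℝ) + lam) * 2 ^ (lam - 2 + a) / (1 - 2 ^ (lam - 2 + a))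
  have hK : 0 < K := add_pos_of_pos_of_nonneg (by positivity)
    (div_nonneg (by positivity) (sub_nonneg.2 hq1.le))
  refine ⟨K * W.toReal, by positivity, fun f x r hr => ?_⟩
  refine (lintegral_kernel_le hn hC0.le hC1 ha hq hr (hΨ1 r hr) hΨ2).trans_eq ?_
  change ENNReal.ofReal (K * r ^ lam) * W * _ = _
  conv_lhs => rw [← ENNReal.ofReal_toReal hW]
  rw [← ENNReal.ofReal_mul (by positivity)]
  congr 2
  ring

/-- the core dyadic estimate: if `Ψ_r(z) = r^{-n}Ψ(z/r)` satisfies the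
linear bound `|Ψ_r(z)| ≤ (C₀/r^{n+1})|z|` and the decay `|Ψ(z)| ≤ C₁|z|^{-(n+2-a)}`
for `|z| > 2` (with `a < 1`), and `∫ Ψ_r(x-z) dz = 0`, then
`(1/r)|∫ (f(z)-f(x)) Ψ_r(x-z) dz| ≤ C r^{λ-1} M^{♯,λ}f(x)` whenever the left-hand
integral converges. -/
theorem core_dyadic_estimate (n : ℕ) (lam a C0 C1 : ℝ)
    (hlam : lam ∈ Set.Ioo (0 : ℝ) 1) (hC0 : 0 < C0) (hC1 : 0 < C1) (ha : a < 1)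
    (Ψ : EuclideanSpace ℝ (Fin n) → ℝ)
    (hΨ1 : ∀ r : ℝ, 0 < r → ∀ z : EuclideanSpace ℝ (Fin n),
      |r ^ (-(n : ℝ)) * Ψ (r⁻¹ • z)| ≤ C0 / r ^ ((n : ℝ) + 1) * ‖z‖)
    (hΨ2 : ∀ z : EuclideanSpace ℝ (Fin n), 2 < ‖z‖ →
      |Ψ z| ≤ C1 * ‖z‖ ^ (-((n : ℝ) + 2 - a))) :
    ∃ C : ℝ, 0 < C ∧ ∀ f : EuclideanSpace ℝ (Fin n) → ℝ,
      LocallyIntegrable f volume → ∀ (x : EuclideanSpace ℝ (Fin n)) (r : ℝ), 0 < r →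
      (∫ z : EuclideanSpace ℝ (Fin n), r ^ (-(n : ℝ)) * Ψ (r⁻¹ • (x - z)) = 0) →
      Integrable (fun z : EuclideanSpace ℝ (Fin n) =>
        (f z - f x) * (r ^ (-(n : ℝ)) * Ψ (r⁻¹ • (x - z)))) →
      ENNReal.ofReal ((1 / r) * |∫ z : EuclideanSpace ℝ (Fin n),
          (f z - f x) * (r ^ (-(n : ℝ)) * Ψ (r⁻¹ • (x - z)))|) ≤
        ENNReal.ofReal (C * r ^ (lam - 1)) * sharpCalderonMaximal n lam f x := by
  rcases eq_or_ne n 0 with rfl | hn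
  · refine ⟨1, one_pos, fun f _ x r _ _ _ => ?_⟩
    simp [Subsingleton.elim _ x]
  obtain ⟨C, hC, hbound⟩ := exists_lintegral_kernel_le (lam := lam) hn hC0 hC1.le (by linarith)
    (by linarith [hlam.2]) hΨ1 hΨ2
  refine ⟨C, hC, fun f _ x r hr _ _ => ?_⟩
  calc _ = ENNReal.ofReal (1 / r) *
        ‖∫ z, (f z - f x) * (r ^ (-(n : ℝ)) * Ψ (r⁻¹ • (x - z)))‖ₑ := by
        rw [ENNReal.ofReal_mul (by positivity), Real.enorm_eq_ofReal_abs]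
    _ ≤ ENNReal.ofReal (1 / r) *
          ∫⁻ z, ENNReal.ofReal |(f z - f x) * (r ^ (-(n : ℝ)) * Ψ (r⁻¹ • (x - z)))| := by
        simp only [← Real.enorm_eq_ofReal_abs]
        gcongr
        exact enorm_integral_le_lintegral_enorm _
    _ ≤ ENNReal.ofReal (1 / r) *
          (ENNReal.ofReal (C * r ^ lam) * sharpCalderonMaximal n lam f x) := by
        gcongr
        exact hbound f x hr
    _ = _ := by
        rw [← mul_assoc, ← ENNReal.ofReal_mul (by positivity), Real.rpow_sub_one hr.ne']
        congr 2
        field_simp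
end
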